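/- arXiv:2009.06211 — 2 statements merged into one kernel-verified Lean document; each statement's English description precedes it below -/
import Mathlib

section
/- Let W₁, …, W_N be real m×m matrices and A₁, …, A_N real n×n matrices such that the spectral radius of the nonnegative matrix ∑_{i=1}^N |A_iᵀ ⊗ W_i| is strictly less than 1. Then for every componentwise non-expansive φ : ℝ → ℝ and every choice of real m×n matrices B₁, …, B_N, the equation X = φ(∑_{i=1}^N (W_i X A_i + B_i)), with φ applied entrywise, has exactly one solution X ∈ ℝ^{m×n}; moreover the iteration X₀ = 0, X_{t+1} = φ(∑_{i=1}^N (W_i X_t A_i + B_i)) converges to this solution. -/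
/-!
By Gelfand's formula, `ρ(M) < 1` forces `M ^ t → 0`. After vectorising `X`, the map
`F X = φ(∑ W_i X A_i + B_i)` satisfies `|vec (F X) - vec (F Y)| ≤ M *ᵥ |vec X - vec Y|`
entrywise, with `M = ∑ |A_iᵀ ⊗ W_i|`, because `vec (W X A) = (Aᵀ ⊗ W) *ᵥ vec X`. Hence `F^[t]`
is `‖M ^ t‖`-Lipschitz for the sup norm: some iterate of `F` is a contraction, whose fixed
point is a fixed point of `F` attracting every orbit since `‖M ^ t‖ → 0`.
-/

open Matrix Kronecker Filter

/-- The spectral radius of a real square matrix: the supremum of the moduli of its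
complex eigenvalues (elements of the spectrum of the matrix viewed over `ℂ`). -/
noncomputable def specRad {ι : Type*} [Fintype ι] [DecidableEq ι]
    (M : Matrix ι ι ℝ) : ENNReal :=
  spectralRadius ℂ (M.map Complex.ofReal)

open Function Topology NNReal

theorem exists_isFixedPt_tendsto_iterate_of_lipschitzWith_iterate {α : Type*} [MetricSpace α]
    [CompleteSpace α] [Nonempty α] {f : α → α} {K : ℕ → ℝ≥0}
    (hf : ∀ t, LipschitzWith (K t) f^[t]) (hK : Tendsto K atTop (𝓝 0)) :
    ∃ z, IsFixedPt f z ∧ ∀ x, Tendsto (fun t => f^[t] x) atTop (𝓝 z) := by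
  obtain ⟨k, hk⟩ := (hK.eventually_lt_const zero_lt_one).exists
  have hcontr : ContractingWith (K k) f^[k] := ⟨hk, hf k⟩
  set z := hcontr.fixedPoint f^[k]
  have hz : IsFixedPt f z := hcontr.isFixedPt_fixedPoint_iterate
  refine ⟨z, hz, fun x => ?_⟩
  rw [tendsto_iff_dist_tendsto_zero]
  refine squeeze_zero (fun _ => dist_nonneg) (fun t => ?_)
    (by simpa using (NNReal.tendsto_coe.2 hK).mul_const (dist x z))
  calc dist (f^[t] x) z = dist (f^[t] x) (f^[t] z) := by rw [(hz.iterate t).eq]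
    _ ≤ K t * dist x z := (hf t).dist_le_mul x z

instance Pi.instHasSolidNorm {ι α : Type*} [Fintype ι] [NormedAddCommGroup α] [Lattice α]
    [HasSolidNorm α] : HasSolidNorm (ι → α) where
  solid _ v h := (pi_norm_le_iff_of_nonneg (norm_nonneg v)).2 fun i =>
    (HasSolidNorm.solid (h i)).trans (norm_le_pi_norm v i)

namespace Matrix

def vecHomeomorph (m n R : Type*) [TopologicalSpace R] : Matrix m n R ≃ₜ (n × m → R) where
  toFun := vec
  invFun v := of fun i j => v (j, i)
  left_inv _ := rfl
  right_inv _ := rfl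
  continuous_toFun := continuous_pi fun _ => continuous_id.matrix_elem _ _
  continuous_invFun := continuous_matrix fun _ _ => continuous_apply _

variable {ι κ : Type*} [Fintype κ]

theorem mulVec_le_mulVec_of_nonneg {M : Matrix ι κ ℝ} (hM : ∀ i j, 0 ≤ M i j) {u v : κ → ℝ}
    (huv : u ≤ v) : M *ᵥ u ≤ M *ᵥ v :=
  fun i => dotProduct_le_dotProduct_of_nonneg_left huv (hM i)

theorem abs_mulVec_le (M : Matrix ι κ ℝ) (v : κ → ℝ) : |M *ᵥ v| ≤ M.map abs *ᵥ |v| := fun i => by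
  simpa [mulVec, dotProduct, abs_mul] using Finset.abs_sum_le_sum_abs (fun j => M i j * v j) _

end Matrix

section LinftyOpNorm

attribute [local instance] Matrix.linftyOpNormedAddCommGroup Matrix.linftyOpNormedRing
  Matrix.linftyOpNormedAlgebra

variable {ι : Type*} [Fintype ι] [DecidableEq ι] {M : Matrix ι ι ℝ}

theorem tendsto_pow_atTop_nhds_zero_of_specRad_lt_one (hM : specRad M < 1) :
    Tendsto (M ^ ·) atTop (𝓝 0) := by
  obtain ⟨r, hρr, hr1⟩ := exists_between hM
  lift r to ℝ≥0 using ne_top_of_lt hr1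
  have hMc : Tendsto (fun t => M.map Complex.ofReal ^ t) atTop (𝓝 0) := by
    refine squeeze_zero_norm' ?_
      (tendsto_pow_atTop_nhds_zero_of_lt_one r.coe_nonneg (by exact_mod_cast hr1))
    filter_upwards [(spectrum.pow_nnnorm_pow_one_div_tendsto_nhds_spectralRadius
      (M.map Complex.ofReal)).eventually_lt_const hρr, eventually_ne_atTop 0] with t ht ht0
    rw [one_div, ← ENNReal.coe_rpow_of_nonneg _ (by positivity), ENNReal.coe_lt_coe] at ht
    have : ‖M.map Complex.ofReal ^ t‖₊ ≤ r ^ t := by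
      rw [← NNReal.rpow_inv_natCast_pow (‖M.map Complex.ofReal ^ t‖₊) ht0]
      exact pow_le_pow_left₀ (by positivity) ht.le t
    exact_mod_cast this
  have hre : ∀ t, M ^ t = (M.map Complex.ofReal ^ t).map Complex.re := fun t => by
    have hpow : M.map Complex.ofReal ^ t = (M ^ t).map Complex.ofReal :=
      (map_pow Complex.ofRealHom.mapMatrix M t).symm
    ext; simp [hpow]
  have hcont : Continuous fun X : Matrix ι ι ℂ => X.map Complex.re :=
    continuous_id.matrix_map Complex.continuous_re
  simpa only [Function.comp_def, Matrix.map_zero _ Complex.zero_re, ← hre] using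
    (hcont.tendsto 0).comp hMc

variable {g : (ι → ℝ) → ι → ℝ}

theorem abs_iterate_sub_le_pow_mulVec (hM : ∀ i j, 0 ≤ M i j)
    (hg : ∀ u v, |g u - g v| ≤ M *ᵥ |u - v|) (t : ℕ) (u v : ι → ℝ) :
    |g^[t] u - g^[t] v| ≤ (M ^ t) *ᵥ |u - v| := by
  induction t with
  | zero => simp
  | succ t ih =>
    rw [iterate_succ_apply', iterate_succ_apply', pow_succ', ← mulVec_mulVec]
    exact (hg _ _).trans (mulVec_le_mulVec_of_nonneg hM ih)

theorem lipschitzWith_iterate_of_abs_sub_le_mulVec (hM : ∀ i j, 0 ≤ M i j)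
    (hg : ∀ u v, |g u - g v| ≤ M *ᵥ |u - v|) (t : ℕ) :
    LipschitzWith ‖M ^ t‖₊ g^[t] := by
  refine LipschitzWith.of_dist_le_mul fun u v => ?_
  rw [dist_eq_norm, dist_eq_norm, coe_nnnorm, ← norm_abs_eq_norm (u - v)]
  calc ‖g^[t] u - g^[t] v‖ ≤ ‖(M ^ t) *ᵥ |u - v|‖ :=
        norm_le_norm_of_abs_le_abs <|
          (abs_iterate_sub_le_pow_mulVec hM hg t u v).trans (le_abs_self _)
    _ ≤ ‖M ^ t‖ * ‖|u - v|‖ := linfty_opNorm_mulVec _ _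

theorem exists_isFixedPt_tendsto_iterate_of_abs_sub_le_mulVec (hM : ∀ i j, 0 ≤ M i j)
    (hρ : specRad M < 1) (hg : ∀ u v, |g u - g v| ≤ M *ᵥ |u - v|) :
    ∃ z, IsFixedPt g z ∧ ∀ x, Tendsto (fun t => g^[t] x) atTop (𝓝 z) := by
  have hnorm :=
    (continuous_nnnorm.tendsto 0).comp (tendsto_pow_atTop_nhds_zero_of_specRad_lt_one hρ)
  rw [nnnorm_zero] at hnorm
  exact exists_isFixedPt_tendsto_iterate_of_lipschitzWith_iterate
    (lipschitzWith_iterate_of_abs_sub_le_mulVec hM hg) hnorm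

end LinftyOpNorm

theorem exists_isFixedPt_tendsto_iterate_of_abs_vec_sub_le_mulVec {m n : Type*} [Fintype m]
    [Fintype n] [DecidableEq m] [DecidableEq n] {M : Matrix (n × m) (n × m) ℝ}
    (hM : ∀ i j, 0 ≤ M i j) (hρ : specRad M < 1) {F : Matrix m n ℝ → Matrix m n ℝ}
    (hF : ∀ X Y, |vec (F X) - vec (F Y)| ≤ M *ᵥ |vec X - vec Y|) :
    ∃ Xs, IsFixedPt F Xs ∧ ∀ X, Tendsto (fun t => F^[t] X) atTop (𝓝 Xs) := by
  let e := vecHomeomorph m n ℝ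
  obtain ⟨z, hz, hconv⟩ := exists_isFixedPt_tendsto_iterate_of_abs_sub_le_mulVec hM hρ
    (g := e ∘ F ∘ e.symm) fun u v => hF (e.symm u) (e.symm v)
  have hsemi : Semiconj e F (e ∘ F ∘ e.symm) := fun X => by simp
  refine ⟨e.symm z, e.eq_symm_apply.2 hz, fun X => ?_⟩
  refine ((e.symm.continuous.tendsto z).comp (hconv (e X))).congr fun t => ?_
  simp [← hsemi.iterate_right t X]

theorem abs_vec_map_sum_sub_le_mulVec {ι m n : Type*} [Fintype ι] [Fintype m] [Fintype n]
    (W : ι → Matrix m m ℝ) (A : ι → Matrix n n ℝ) (B : ι → Matrix m n ℝ) {φ : ℝ → ℝ}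
    (hφ : ∀ a b, |φ a - φ b| ≤ |a - b|) (X Y : Matrix m n ℝ) :
    |vec ((∑ i, (W i * X * A i + B i)).map φ) - vec ((∑ i, (W i * Y * A i + B i)).map φ)| ≤
      (∑ i, ((A i)ᵀ ⊗ₖ W i).map abs) *ᵥ |vec X - vec Y| := by
  have hlin : vec (∑ i, (W i * X * A i + B i)) - vec (∑ i, (W i * Y * A i + B i)) =
      ∑ i, ((A i)ᵀ ⊗ₖ W i) *ᵥ (vec X - vec Y) := by
    simp only [vec_sum, vec_add, mulVec_sub, kronecker_mulVec_vec, transpose_transpose,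
      ← Finset.sum_sub_distrib, add_sub_add_right_eq_sub]
  calc _ ≤ |vec (∑ i, (W i * X * A i + B i)) - vec (∑ i, (W i * Y * A i + B i))| :=
        fun p => hφ _ _
    _ ≤ ∑ i, |((A i)ᵀ ⊗ₖ W i) *ᵥ (vec X - vec Y)| :=
        hlin ▸ Finset.le_sum_of_subadditive _ abs_zero.le abs_add_le _ _
    _ ≤ ∑ i, ((A i)ᵀ ⊗ₖ W i).map abs *ᵥ |vec X - vec Y| :=
        Finset.sum_le_sum fun i _ => abs_mulVec_le _ _
    _ = _ := (sum_mulVec _ _ _).symm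

theorem stmt_5 {m n N : ℕ}
    (W : Fin N → Matrix (Fin m) (Fin m) ℝ) (A : Fin N → Matrix (Fin n) (Fin n) ℝ)
    (hρ : specRad (∑ i, ((A i)ᵀ ⊗ₖ W i).map fun a => |a|) < 1)
    (φ : ℝ → ℝ) (hφ : ∀ a b : ℝ, |φ a - φ b| ≤ |a - b|)
    (B : Fin N → Matrix (Fin m) (Fin n) ℝ)
    (X : ℕ → Matrix (Fin m) (Fin n) ℝ)
    (hX0 : X 0 = 0)
    (hXs : ∀ t, X (t + 1) = (∑ i, (W i * X t * A i + B i)).map φ) :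
    ∃ Xs : Matrix (Fin m) (Fin n) ℝ,
      Xs = (∑ i, (W i * Xs * A i + B i)).map φ ∧
      (∀ Y : Matrix (Fin m) (Fin n) ℝ, Y = (∑ i, (W i * Y * A i + B i)).map φ → Y = Xs) ∧
      Tendsto X atTop (nhds Xs) := by
  set F : Matrix (Fin m) (Fin n) ℝ → Matrix (Fin m) (Fin n) ℝ :=
    fun Y => (∑ i, (W i * Y * A i + B i)).map φ
  have hM : ∀ p q, 0 ≤ (∑ i, ((A i)ᵀ ⊗ₖ W i).map fun a => |a|) p q := fun p q => by
    simp only [Matrix.sum_apply, map_apply]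
    positivity
  obtain ⟨Xs, hfix, hconv⟩ := exists_isFixedPt_tendsto_iterate_of_abs_vec_sub_le_mulVec hM hρ
    (abs_vec_map_sum_sub_le_mulVec W A B hφ)
  have hXF : X = fun t => F^[t] 0 := funext fun t => by
    induction t with
    | zero => exact hX0
    | succ t ih => rw [hXs, ih, iterate_succ_apply']
  refine ⟨Xs, hfix.symm, fun Y hY => ?_, hXF ▸ hconv 0⟩
  have hYfix : IsFixedPt F Y := hY.symm
  exact tendsto_nhds_unique
    (tendsto_const_nhds.congr fun t => (hYfix.iterate t).symm) (hconv Y)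
end

section
/- Let W be a real m×m matrix and A a real n×n matrix with spectral radius of |Aᵀ ⊗ W| strictly less than 1. Let D be a real m×n matrix with |D_{ij}| ≤ 1 for all i, j, and let C be any real m×n matrix. Then the backward-gradient equilibrium equation G = D ⊙ (Wᵀ G Aᵀ + C) has exactly one solution G ∈ ℝ^{m×n}, and it is obtained as the limit of the iteration G₀ = 0, G_{t+1} = D ⊙ (Wᵀ G_t Aᵀ + C). -/
/-
Vectorizing, `vec (D ⊙ (Wᵀ X Aᵀ + C))` depends on `vec X` only through `vec X ᵥ* (Aᵀ ⊗ W)`, so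
the iteration map `F` satisfies `|F x - F y| ≤ |x - y| ᵥ* N` entrywise with `N = |Aᵀ ⊗ W|`, and
hence `|Fᵗ x - Fᵗ y| ≤ |x - y| ᵥ* Nᵗ` because `N` is nonnegative. By Gelfand's formula,
`ρ(N) < 1` makes `∑ Nᵗ` summable. Consecutive iterates therefore differ by a summable sequence
and converge, the limit is a fixed point because `F` is continuous, and two fixed points `p`, `q`
satisfy `|p - q| ≤ |p - q| ᵥ* Nᵗ → 0`.
-/

open Matrix Kronecker Filter

open scoped Topology
open Function

theorem summable_norm_pow_of_spectralRadius_lt_one {A : Type*} [NormedRing A]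
    [NormedAlgebra ℂ A] [CompleteSpace A] {a : A} (h : spectralRadius ℂ a < 1) :
    Summable fun n => ‖a ^ n‖ := by
  obtain ⟨r, hρr, hr1⟩ := ENNReal.lt_iff_exists_nnreal_btwn.mp h
  refine Summable.of_norm_bounded_eventually_nat (g := fun n => (r : ℝ) ^ n)
    (summable_geometric_of_lt_one r.coe_nonneg (by exact_mod_cast hr1)) ?_
  have hgelfand := spectrum.pow_nnnorm_pow_one_div_tendsto_nhds_spectralRadius a
  filter_upwards [hgelfand.eventually_lt_const hρr, eventually_gt_atTop 0] with n hn hn0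
  rw [one_div, ENNReal.rpow_inv_lt_iff (by positivity), ENNReal.rpow_natCast, ← ENNReal.coe_pow,
    ENNReal.coe_lt_coe] at hn
  rw [norm_norm]
  exact_mod_cast hn.le

theorem summable_pow_of_specRad_lt_one {ι : Type*} [Fintype ι] [DecidableEq ι]
    {M : Matrix ι ι ℝ} (h : specRad M < 1) : Summable fun n => M ^ n := by
  let _ : NormedRing (Matrix ι ι ℂ) := Matrix.linftyOpNormedRing
  let _ : NormedAlgebra ℂ (Matrix ι ι ℂ) := Matrix.linftyOpNormedAlgebra
  have : CompleteSpace (Matrix ι ι ℂ) := FiniteDimensional.complete ℂ _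
  have hsum : Summable fun n => (M.map Complex.ofReal) ^ n :=
    .of_norm (summable_norm_pow_of_spectralRadius_lt_one h)
  have hre : Continuous fun A : Matrix ι ι ℂ => A.map Complex.re :=
    continuous_id.matrix_map Complex.continuous_re
  have hre_pow : ∀ n, (M.map Complex.ofReal ^ n).map Complex.re = M ^ n := fun n => by
    rw [show M.map Complex.ofReal = Complex.ofRealHom.mapMatrix M from rfl, ← map_pow]
    ext
    simp
  simpa [Function.comp_def, hre_pow] using hsum.map Complex.reAddGroupHom.mapMatrix hre

section VecMul

variable {R ι κ : Type*} [Fintype ι] [CommRing R] [LinearOrder R] [IsStrictOrderedRing R]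

theorem vecMul_le_vecMul_of_nonneg {N : Matrix ι κ R} (hN : ∀ i j, 0 ≤ N i j) {v w : ι → R}
    (hvw : v ≤ w) : v ᵥ* N ≤ w ᵥ* N :=
  fun j => dotProduct_le_dotProduct_of_nonneg_right hvw fun i => hN i j

theorem abs_vecMul_le (v : ι → R) (M : Matrix ι κ R) : |v ᵥ* M| ≤ |v| ᵥ* M.map abs := by
  intro j
  simpa only [Pi.abs_apply, vecMul, dotProduct, map_apply, abs_mul] using
    Finset.abs_sum_le_sum_abs (fun i => v i * M i j) Finset.univ

end VecMul

section AbsContraction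

variable {ι : Type*} [Fintype ι] {N : Matrix ι ι ℝ} {F : (ι → ℝ) → ι → ℝ}

theorem continuous_of_abs_sub_le_vecMul (hF : ∀ x y, |F x - F y| ≤ |x - y| ᵥ* N) :
    Continuous F := by
  refine continuous_pi fun i => continuous_iff_continuousAt.2 fun x =>
    tendsto_iff_norm_sub_tendsto_zero.2 ?_
  have hcont : Continuous fun y => |y - x| :=
    continuous_pi fun j => ((continuous_apply j).sub continuous_const).abs
  have hbound : Tendsto (fun y => (|y - x| ᵥ* N) i) (𝓝 x) (𝓝 0) :=
    ((continuous_apply i).comp (hcont.matrix_vecMul continuous_const)).tendsto' x 0 (by simp)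
  exact squeeze_zero (fun _ => norm_nonneg _) (fun y => hF y x i) hbound

variable [DecidableEq ι]

theorem abs_iterate_sub_le (hN : ∀ i j, 0 ≤ N i j) (hF : ∀ x y, |F x - F y| ≤ |x - y| ᵥ* N)
    (x y : ι → ℝ) : ∀ t : ℕ, |F^[t] x - F^[t] y| ≤ |x - y| ᵥ* N ^ t
  | 0 => by simp
  | t + 1 => by
    rw [iterate_succ_apply', iterate_succ_apply', pow_succ, ← vecMul_vecMul]
    exact (hF _ _).trans (vecMul_le_vecMul_of_nonneg hN (abs_iterate_sub_le hN hF x y t))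

theorem exists_tendsto_iterate_of_abs_sub_le_vecMul (hN : ∀ i j, 0 ≤ N i j)
    (hF : ∀ x y, |F x - F y| ≤ |x - y| ᵥ* N) (hsum : Summable fun t => N ^ t) (x : ι → ℝ) :
    ∃ p, Tendsto (fun t => F^[t] x) atTop (𝓝 p) := by
  have hbound : Summable fun t => |F x - x| ᵥ* N ^ t :=
    hsum.map (vecMulBilin ℝ ℝ |F x - x|) (continuous_const.matrix_vecMul continuous_id)
  have hsteps : Summable fun t => F^[t + 1] x - F^[t] x := by
    refine Pi.summable.2 fun i => .of_norm_bounded (Pi.summable.1 hbound i) fun t => ?_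
    simpa [Real.norm_eq_abs] using abs_iterate_sub_le hN hF (F x) x t i
  refine ⟨∑' t, (F^[t + 1] x - F^[t] x) + x, ?_⟩
  refine (hsteps.hasSum.tendsto_sum_nat.add_const x).congr fun T => ?_
  rw [Finset.sum_range_sub (fun t => F^[t] x)]
  simp

theorem eq_of_isFixedPt_of_abs_sub_le_vecMul (hN : ∀ i j, 0 ≤ N i j)
    (hF : ∀ x y, |F x - F y| ≤ |x - y| ᵥ* N) (hpow : Tendsto (fun t => N ^ t) atTop (𝓝 0))
    {p q : ι → ℝ} (hp : IsFixedPt F p) (hq : IsFixedPt F q) : p = q := by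
  have hle : ∀ t, |p - q| ≤ |p - q| ᵥ* N ^ t := fun t => by
    simpa only [(hp.iterate t).eq, (hq.iterate t).eq] using abs_iterate_sub_le hN hF p q t
  have hlim : Tendsto (fun t => |p - q| ᵥ* N ^ t) atTop (𝓝 0) :=
    ((continuous_const.matrix_vecMul continuous_id).tendsto' 0 0 (by simp)).comp hpow
  have hnonpos : |p - q| ≤ 0 := le_of_tendsto_of_tendsto' tendsto_const_nhds hlim hle
  exact funext fun i => sub_eq_zero.1 (abs_nonpos_iff.1 (hnonpos i))

theorem exists_unique_isFixedPt_of_abs_sub_le_vecMul (hN : ∀ i j, 0 ≤ N i j)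
    (hF : ∀ x y, |F x - F y| ≤ |x - y| ᵥ* N) (hsum : Summable fun t => N ^ t) (x : ι → ℝ) :
    ∃ p, IsFixedPt F p ∧ (∀ q, IsFixedPt F q → q = p) ∧
      Tendsto (fun t => F^[t] x) atTop (𝓝 p) := by
  obtain ⟨p, hp⟩ := exists_tendsto_iterate_of_abs_sub_le_vecMul hN hF hsum x
  have hfix := isFixedPt_of_tendsto_iterate hp (continuous_of_abs_sub_le_vecMul hF).continuousAt
  exact ⟨p, hfix, fun q hq =>
    eq_of_isFixedPt_of_abs_sub_le_vecMul hN hF hsum.tendsto_atTop_zero hq hfix, hp⟩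

end AbsContraction

theorem exists_unique_fixedPoint_of_abs_vec_sub_le {m n : Type*} [Fintype m] [Fintype n]
    [DecidableEq m] [DecidableEq n] {N : Matrix (n × m) (n × m) ℝ}
    (hN : ∀ i j, 0 ≤ N i j) (hsum : Summable fun t => N ^ t) {Φ : Matrix m n ℝ → Matrix m n ℝ}
    (hΦ : ∀ X Y, |vec (Φ X) - vec (Φ Y)| ≤ |vec X - vec Y| ᵥ* N) (X₀ : Matrix m n ℝ) :
    ∃ Xs, Φ Xs = Xs ∧ (∀ X, Φ X = X → X = Xs) ∧ Tendsto (fun t => Φ^[t] X₀) atTop (𝓝 Xs) := by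
  set unvec : (n × m → ℝ) → Matrix m n ℝ := fun v => of fun i j => v (j, i)
  set F : (n × m → ℝ) → n × m → ℝ := fun v => vec (Φ (unvec v))
  have hconj : Semiconj vec Φ F := fun _ => rfl
  obtain ⟨p, hp, huniq, hlim⟩ :=
    exists_unique_isFixedPt_of_abs_sub_le_vecMul hN (fun x y => hΦ (unvec x) (unvec y)) hsum
      (vec X₀)
  refine ⟨unvec p, vec_inj.1 hp, fun X hX => vec_inj.1 (huniq _ (congrArg vec hX)), ?_⟩
  have hcont : Continuous unvec :=
    continuous_pi fun i => continuous_pi fun j => continuous_apply (j, i)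
  refine (hcont.tendsto p |>.comp hlim).congr fun t => ?_
  change unvec (F^[t] (vec X₀)) = _
  rw [← hconj.iterate_right t X₀]
  rfl

theorem abs_vec_hadamard_sub_le {m n : Type*} [Fintype m] [Fintype n] (W : Matrix m m ℝ)
    (A : Matrix n n ℝ) {D : Matrix m n ℝ} (hD : ∀ i j, |D i j| ≤ 1) (C X Y : Matrix m n ℝ) :
    |vec (D ⊙ (Wᵀ * X * Aᵀ + C)) - vec (D ⊙ (Wᵀ * Y * Aᵀ + C))| ≤
      |vec X - vec Y| ᵥ* (Aᵀ ⊗ₖ W).map abs := by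
  have hdiff : vec (D ⊙ (Wᵀ * X * Aᵀ + C)) - vec (D ⊙ (Wᵀ * Y * Aᵀ + C)) =
      vec D * ((vec X - vec Y) ᵥ* (Aᵀ ⊗ₖ W)) := by
    rw [← vec_sub X Y, vec_vecMul_kronecker, Matrix.mul_sub, Matrix.sub_mul]
    ext
    simp only [vec, hadamard_apply, Matrix.add_apply, Matrix.sub_apply, Pi.sub_apply, Pi.mul_apply]
    ring
  intro k
  rw [hdiff, Pi.abs_apply, Pi.mul_apply, abs_mul]
  calc |vec D k| * |((vec X - vec Y) ᵥ* (Aᵀ ⊗ₖ W)) k|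
      ≤ 1 * |((vec X - vec Y) ᵥ* (Aᵀ ⊗ₖ W)) k| := by gcongr; exact hD _ _
    _ ≤ (|vec X - vec Y| ᵥ* (Aᵀ ⊗ₖ W).map abs) k := by
      rw [one_mul]; exact abs_vecMul_le _ _ k

theorem stmt_16 {m n : ℕ} (W : Matrix (Fin m) (Fin m) ℝ) (A : Matrix (Fin n) (Fin n) ℝ)
    (hρ : specRad ((Aᵀ ⊗ₖ W).map fun a => |a|) < 1)
    (D : Matrix (Fin m) (Fin n) ℝ) (hD : ∀ i j, |D i j| ≤ 1)
    (C : Matrix (Fin m) (Fin n) ℝ)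
    (G : ℕ → Matrix (Fin m) (Fin n) ℝ)
    (hG0 : G 0 = 0)
    (hGs : ∀ t, G (t + 1) = Matrix.hadamard D (Wᵀ * G t * Aᵀ + C)) :
    ∃ Gs : Matrix (Fin m) (Fin n) ℝ,
      Gs = Matrix.hadamard D (Wᵀ * Gs * Aᵀ + C) ∧
      (∀ G' : Matrix (Fin m) (Fin n) ℝ,
        G' = Matrix.hadamard D (Wᵀ * G' * Aᵀ + C) → G' = Gs) ∧
      Tendsto G atTop (nhds Gs) := by
  set Φ : Matrix (Fin m) (Fin n) ℝ → Matrix (Fin m) (Fin n) ℝ := fun X => D ⊙ (Wᵀ * X * Aᵀ + C)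
  have hG : G = fun t => Φ^[t] 0 := by
    funext t
    induction t with
    | zero => exact hG0
    | succ t ih => rw [hGs, ih, iterate_succ_apply']
  obtain ⟨Gs, hfix, huniq, hlim⟩ := exists_unique_fixedPoint_of_abs_vec_sub_le
    (fun _ _ => abs_nonneg _) (summable_pow_of_specRad_lt_one hρ)
    (abs_vec_hadamard_sub_le W A hD C) 0
  exact ⟨Gs, hfix.symm, fun G' hG' => huniq G' hG'.symm, hG ▸ hlim⟩
end
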